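/- arXiv:2303.09487 — 2 statements merged into one kernel-verified Lean document; each statement's English description precedes it below -/
import Mathlib

section
/- Let f(u) = Θ_{2ϖ₁}(u) + 2Θ_{ϖ₂}(u) for the root system G₂, where Θ denotes the generalized cosine. Then in the Chebyshev coordinates z = Θ(u), f equals 6z₁² − 2z₁ − 1, and the global minimum of f over R^n equals −7/6. -/
noncomputable section
open scoped BigOperators

abbrev EV (n : ℕ) := EuclideanSpace ℝ (Fin n)

/-- The Weyl group of `G₂` is `S₃ × {±1}`, acting on `ℝ³/⟨(1,1,1)⟩` by permutation of the
coordinates and by a global sign. -/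
def g2Act (g : Equiv.Perm (Fin 3) × Bool) (μ : EV 3) : EV 3 :=
  WithLp.toLp 2 (fun j => (if g.2 then (1 : ℝ) else -1) * μ (g.1 j))

/-- The generalized cosine for `G₂`: `Θ_μ(u) = (1/|W|) Σ_{A ∈ W} e^{-2πi⟨Aμ,u⟩}`. -/
def g2Gencos (μ u : EV 3) : ℂ :=
  ((Fintype.card (Equiv.Perm (Fin 3) × Bool) : ℂ))⁻¹ *
    ∑ g : Equiv.Perm (Fin 3) × Bool,
      Complex.exp (-(2 * Real.pi * Complex.I) * ((inner ℝ (g2Act g μ) u : ℝ) : ℂ))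

/-- The fundamental weight `ϖ₁ = (0,-1,1)` of `G₂`. -/
def g2ϖ₁ : EV 3 := WithLp.toLp 2 (fun j => ![0, -1, 1] j : Fin 3 → ℝ)

/-- The fundamental weight `ϖ₂ = (-1,-1,2)` of `G₂`. -/
def g2ϖ₂ : EV 3 := WithLp.toLp 2 (fun j => ![-1, -1, 2] j : Fin 3 → ℝ)

/-- The invariant trigonometric polynomial `f = Θ_{2ϖ₁} + 2 Θ_{ϖ₂}`. -/
def g2f (u : EV 3) : ℂ := g2Gencos ((2 : ℝ) • g2ϖ₁) u + 2 * g2Gencos g2ϖ₂ u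

/-!
The Weyl group contains `-1`, so the terms of `Θ_μ(u)` pair up into cosines and every generalized
cosine is real. In the variables `X_j = exp(-2πi u_j)` both sides of `f = 6 z₁² - 2 z₁ - 1` are
Laurent polynomials, and the identity is checked by expanding them. Since
`6 z₁² - 2 z₁ - 1 = 6 (z₁ - 1/6)² - 7/6`, the value `-7/6` is a lower bound, attained at
`u = (0, 1/6, 1/3)`, where `z₁ = 1/6`.
-/
open Complex Equiv

theorem Equiv.Perm.sum_fin_three {M : Type*} [AddCommMonoid M] (F : Perm (Fin 3) → M) :
    ∑ σ, F σ = F 1 + F (swap 0 1) + F (swap 0 2) + F (swap 1 2) + F (swap 0 1 * swap 1 2) +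
      F (swap 1 2 * swap 0 1) := by
  have : (Finset.univ : Finset (Perm (Fin 3))) =
      [1, swap 0 1, swap 0 2, swap 1 2, swap 0 1 * swap 1 2, swap 1 2 * swap 0 1].toFinset := by
    decide
  rw [this, List.sum_toFinset _ (by decide)]
  simp [add_assoc]

def negFourierChar : AddChar ℝ ℂ where
  toFun t := exp (-(2 * Real.pi * I) * t)
  map_zero_eq_one' := by simp
  map_add_eq_mul' s t := by push_cast; rw [mul_add, exp_add]

local notation "𝐞" => negFourierChar

lemma negFourierChar_apply (t : ℝ) : 𝐞 t = exp (-(2 * Real.pi * I) * t) := rfl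

lemma negFourierChar_add_neg (t : ℝ) : 𝐞 t + 𝐞 (-t) = (2 * Real.cos (2 * Real.pi * t) : ℝ) := by
  simp only [negFourierChar_apply, ofReal_mul, ofReal_ofNat, ofReal_cos, cos, ofReal_neg]
  ring_nf

lemma negFourierChar_ne_zero (t : ℝ) : 𝐞 t ≠ 0 := exp_ne_zero _

lemma negFourierChar_two_mul (t : ℝ) : 𝐞 (2 * t) = 𝐞 t ^ 2 := by
  rw [two_mul, AddChar.map_add_eq_mul, sq]

lemma g2Gencos_eq_sum_perm (μ u : EV 3) :
    g2Gencos μ u = 12⁻¹ * ∑ σ : Perm (Fin 3),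
      (𝐞 (μ (σ 0) * u 0 + μ (σ 1) * u 1 + μ (σ 2) * u 2) +
        𝐞 (-(μ (σ 0) * u 0 + μ (σ 1) * u 1 + μ (σ 2) * u 2))) := by
  have hcard : (Fintype.card (Perm (Fin 3) × Bool) : ℂ) = 12 := by
    rw [Fintype.card_prod, Fintype.card_perm]; norm_num [Nat.factorial]
  rw [g2Gencos, hcard, Fintype.sum_prod_type]
  refine congrArg _ (Finset.sum_congr rfl fun σ _ => ?_)
  rw [Fintype.sum_bool, add_comm]
  simp only [g2Act, PiLp.inner_apply, RCLike.inner_apply, conj_trivial, Fin.sum_univ_three,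
    negFourierChar_apply, if_true]
  push_cast
  ring_nf

lemma g2Gencos_eq_ofReal (μ u : EV 3) :
    g2Gencos μ u = ((6⁻¹ * ∑ σ : Perm (Fin 3),
      Real.cos (2 * Real.pi * (μ (σ 0) * u 0 + μ (σ 1) * u 1 + μ (σ 2) * u 2)) : ℝ) : ℂ) := by
  rw [g2Gencos_eq_sum_perm, ofReal_mul, ofReal_sum, Finset.mul_sum, Finset.mul_sum]
  refine Finset.sum_congr rfl fun σ _ => ?_
  rw [negFourierChar_add_neg]
  push_cast
  ring

lemma g2f_eq_chebyshev (u : EV 3) :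
    g2f u = 6 * g2Gencos g2ϖ₁ u ^ 2 - 2 * g2Gencos g2ϖ₁ u - 1 := by
  simp only [g2f, g2Gencos_eq_sum_perm, Perm.sum_fin_three]
  simp only [g2ϖ₁, g2ϖ₂, Perm.coe_one, id_eq, Perm.coe_mul, Function.comp_apply, swap_apply_left,
    swap_apply_right, swap_apply_of_ne_of_ne, ne_eq, Fin.reduceEq, not_false_eq_true,
    PiLp.smul_apply, smul_eq_mul, Matrix.cons_val, Matrix.cons_val_zero, Matrix.cons_val_one,
    mul_zero, zero_mul, mul_one, one_mul, mul_neg, neg_mul, zero_add, add_zero, neg_add_rev,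
    neg_neg, AddChar.map_add_eq_mul, AddChar.map_neg_eq_inv, negFourierChar_two_mul]
  have := negFourierChar_ne_zero (u 0)
  have := negFourierChar_ne_zero (u 1)
  have := negFourierChar_ne_zero (u 2)
  field_simp
  ring

lemma g2Gencos_ϖ₁_eq_one_sixth : g2Gencos g2ϖ₁ (WithLp.toLp 2 ![0, 1 / 6, 1 / 3]) = 1 / 6 := by
  have hcos₁ : Real.cos (2 * Real.pi * (1 / 6)) = 1 / 2 := by
    rw [← Real.cos_pi_div_three]; ring_nf
  have hcos₂ : Real.cos (2 * Real.pi * (1 / 3)) = -(1 / 2) := by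
    rw [show 2 * Real.pi * (1 / 3) = Real.pi - Real.pi / 3 by ring, Real.cos_pi_sub,
      Real.cos_pi_div_three]
  rw [g2Gencos_eq_ofReal, show (1 / 6 : ℂ) = ((1 / 6 : ℝ) : ℂ) by push_cast; rfl, ofReal_inj,
    Perm.sum_fin_three]
  simp only [g2ϖ₁, Perm.coe_one, id_eq, Perm.coe_mul, Function.comp_apply, swap_apply_left,
    swap_apply_right, swap_apply_of_ne_of_ne, ne_eq, Fin.reduceEq, not_false_eq_true,
    Matrix.cons_val, Matrix.cons_val_zero, Matrix.cons_val_one]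
  norm_num [hcos₁, hcos₂]

/-- For the root system `G₂`, the invariant trigonometric polynomial
`f = Θ_{2ϖ₁} + 2Θ_{ϖ₂}` equals `6 z₁² − 2 z₁ − 1` in the Chebyshev coordinate
`z₁ = Θ_{ϖ₁}(u)`, and its global minimum over `ℝⁿ` is `−7/6`. -/
theorem statement5 :
    (∀ u : EV 3, g2f u = 6 * (g2Gencos g2ϖ₁ u) ^ 2 - 2 * g2Gencos g2ϖ₁ u - 1) ∧
    IsLeast { x : ℝ | ∃ u : EV 3, g2f u = (x : ℂ) } (-7 / 6) := by
  refine ⟨g2f_eq_chebyshev, ⟨WithLp.toLp 2 ![0, 1 / 6, 1 / 3], ?_⟩, ?_⟩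
  · rw [g2f_eq_chebyshev, g2Gencos_ϖ₁_eq_one_sixth]
    norm_num
  · rintro x ⟨u, hu⟩
    obtain ⟨z, hz⟩ : ∃ z : ℝ, g2Gencos g2ϖ₁ u = z := ⟨_, g2Gencos_eq_ofReal _ _⟩
    rw [g2f_eq_chebyshev, hz] at hu
    have hx : x = 6 * z ^ 2 - 2 * z - 1 := by exact_mod_cast hu.symm
    nlinarith [sq_nonneg (z - 1 / 6)]
end
end

section
/- Let P = ConvHull(B¹₁) be the crosspolytope in R². Then for every even r > 0, the measurable chromatic number of Z² avoiding the ℓ₁-sphere of radius r satisfies χ(Z², B¹_r) = 4: the lower bound 4 follows from the spectral bound since 2 divides r (via the r = 2 case), and the upper bound from χ_m(R², ∂P) = 4 together with the inclusion of G(Z², B¹_r) as a subgraph of G(R², ∂(rP)). -/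
noncomputable section
open scoped BigOperators

private def pairToFin4 (p : ZMod 2 × ZMod 2) : Fin 4 :=
  ⟨p.1.val * 2 + p.2.val, by have h1 := p.1.val_lt; have h2 := p.2.val_lt; omega⟩

private lemma pairToFin4_inj : Function.Injective pairToFin4 := by decide

private lemma div_step (R x : ℤ) (hR : 0 < R) :
    (((x + R) / R : ℤ) : ZMod 2) ≠ ((x / R : ℤ) : ZMod 2) := by
  have h : (x + R) / R = x / R + 1 := by
    have := Int.add_mul_ediv_right x 1 hR.ne'
    simpa using this
  rw [h]
  push_cast
  intro hc
  have h10 : (1 : ZMod 2) = 0 := by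
    have := left_eq_add.mp hc.symm
    exact this
  exact one_ne_zero h10

/-- For every even `r > 0`, the chromatic number of the graph on `ℤ²`
avoiding the `ℓ₁`-sphere of radius `r` equals `4`: there is a proper `4`-coloring, and
every proper coloring uses at least `4` colors. -/
theorem statement17 {r : ℕ} (hr : Even r) (hr0 : 0 < r) :
    (∃ C : (Fin 2 → ℤ) → Fin 4, ∀ u v : Fin 2 → ℤ,
      (∑ i, (u i - v i).natAbs) = r → C u ≠ C v) ∧
    (∀ (k : ℕ) (C : (Fin 2 → ℤ) → Fin k),
      (∀ u v : Fin 2 → ℤ, (∑ i, (u i - v i).natAbs) = r → C u ≠ C v) → 4 ≤ k) := by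
  constructor
  · -- Upper bound: explicit 4-coloring
    have hR : (0:ℤ) < (r:ℤ) := by exact_mod_cast hr0
    refine ⟨fun u => pairToFin4
      (((((u 0 + u 1) / (r:ℤ) : ℤ)) : ZMod 2), ((((u 0 - u 1) / (r:ℤ) : ℤ)) : ZMod 2)), ?_⟩
    intro u v hd hC
    rw [Fin.sum_univ_two] at hd
    have hp := pairToFin4_inj hC
    have h1 := congrArg Prod.fst hp
    have h2 := congrArg Prod.snd hp
    simp only at h1 h2
    have key : (u 0 - v 0 + (u 1 - v 1)).natAbs = r ∨
        (u 0 - v 0 - (u 1 - v 1)).natAbs = r := by clear hC hp h1 h2; omega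
    rcases key with h | h
    · have hcase : u 0 + u 1 = (v 0 + v 1) + (r:ℤ) ∨ v 0 + v 1 = (u 0 + u 1) + (r:ℤ) := by
        clear hC hp h1 h2; omega
      rcases hcase with hc | hc
      · rw [hc] at h1
        exact div_step (r:ℤ) (v 0 + v 1) hR h1
      · rw [hc] at h1
        exact div_step (r:ℤ) (u 0 + u 1) hR h1.symm
    · have hcase : u 0 - u 1 = (v 0 - v 1) + (r:ℤ) ∨ v 0 - v 1 = (u 0 - u 1) + (r:ℤ) := by
        clear hC hp h1 h2; omega
      rcases hcase with hc | hc
      · rw [hc] at h2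
        exact div_step (r:ℤ) (v 0 - v 1) hR h2
      · rw [hc] at h2
        exact div_step (r:ℤ) (u 0 - u 1) hR h2.symm
  · -- Lower bound: a 4-clique
    intro k C hC
    obtain ⟨m, hm⟩ := hr
    have hm0 : 0 < m := by omega
    set M : ℤ := (m : ℤ) with hMdef
    set pts : Fin 4 → (Fin 2 → ℤ) := ![![0,0],![M,M],![M+M,0],![M,-M]] with hpts
    have hpair : ∀ i j : Fin 4, i ≠ j → C (pts i) ≠ C (pts j) := by
      intro i j hne
      fin_cases i <;> fin_cases j <;>
        first
          | exact absurd rfl hne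
          | (refine hC _ _ ?_
             simp [hpts, Fin.sum_univ_two]
             omega)
    have hinj : Function.Injective (fun i : Fin 4 => C (pts i)) := by
      intro i j hij
      by_contra hne
      exact hpair i j hne hij
    have hcard := Fintype.card_le_of_injective _ hinj
    simpa using hcard
end
end
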